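/- Let f : P_2(ℝ^d) → ℝ be L-differentiable and define f̃ : P_2(ℝ^d × ℝ) → ℝ by f̃(μ̃) := f(μ̃(· × ℝ)) (i.e. f applied to the first marginal). Then for any μ ∈ P_2(ℝ^d) at which f is L-differentiable, f̃ is L-differentiable at μ × δ₀ with D^L f̃(μ × δ₀)(x, r) = (D^L f(μ)(x), 0) for (x, r) ∈ ℝ^d × ℝ. -/

import Mathlib

open MeasureTheory Filter Set
open scoped Topology ENNReal RealInnerProductSpace

/-- L-differentiability of `f` at `μ` with Lions derivative `γ`. -/
def LDiffAt {d : ℕ} (f : Measure (EuclideanSpace ℝ (Fin d)) → ℝ)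
    (μ : Measure (EuclideanSpace ℝ (Fin d)))
    (γ : EuclideanSpace ℝ (Fin d) → EuclideanSpace ℝ (Fin d)) : Prop :=
  MemLp γ 2 μ ∧
  ∀ ε > (0 : ℝ), ∃ δ > (0 : ℝ),
    ∀ φ : EuclideanSpace ℝ (Fin d) → EuclideanSpace ℝ (Fin d),
      MemLp φ 2 μ → Real.sqrt (∫ x, ‖φ x‖ ^ 2 ∂μ) ≤ δ →
      abs (f (Measure.map (fun x => x + φ x) μ) - f μ - ∫ x, ⟪γ x, φ x⟫ ∂μ)
        ≤ ε * Real.sqrt (∫ x, ‖φ x‖ ^ 2 ∂μ)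

/-- We identify `ℝᵈ × ℝ` with `ℝ^{d+1}`, the pair `(x, r)` corresponding to
`Fin.snoc x r`. -/
noncomputable def pairEmbed {d : ℕ} (p : EuclideanSpace ℝ (Fin d) × ℝ) :
    EuclideanSpace ℝ (Fin (d + 1)) :=
  (EuclideanSpace.equiv (Fin (d + 1)) ℝ).symm
    (Fin.snoc (EuclideanSpace.equiv (Fin d) ℝ p.1) p.2)

/-- The first marginal projection `ℝ^{d+1} → ℝᵈ`. -/
noncomputable def firstMarginal {d : ℕ} (x : EuclideanSpace ℝ (Fin (d + 1))) :
    EuclideanSpace ℝ (Fin d) :=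
  (EuclideanSpace.equiv (Fin d) ℝ).symm
    (Fin.init (EuclideanSpace.equiv (Fin (d + 1)) ℝ x))

/-!
The embedding `x ↦ (x, 0)` is a linear isometry `ι : ℝᵈ → ℝᵈ⁺¹` whose adjoint is the first-marginal
projection `π`, and `μ × δ₀` is `ι_# μ`. A perturbation `φ̃ ∈ L²(ι_# μ)` pulls back to
`φ = π ∘ φ̃ ∘ ι ∈ L²(μ)`, which carries the whole first-order expansion of `f` over:
`π ∘ ι = id` gives `π_#((id + φ̃)_# ι_# μ) = (id + φ)_# μ`, adjointness gives
`⟪ι ∘ γ ∘ π, φ̃⟫_{L²(ι_# μ)} = ⟪γ, φ⟫_{L²(μ)}`, and `‖π‖ ≤ 1` gives `‖φ‖_{L²} ≤ ‖φ̃‖_{L²}`.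
-/

open scoped InnerProduct

namespace LinearIsometry

variable {E F : Type*} [NormedAddCommGroup E] [InnerProductSpace ℝ E] [CompleteSpace E]
  [NormedAddCommGroup F] [InnerProductSpace ℝ F] [CompleteSpace F] (ι : E →ₗᵢ[ℝ] F)

theorem adjoint_apply_apply (x : E) : (ι.toContinuousLinearMap†) (ι x) = x := by
  have h := (ContinuousLinearMap.isometry_iff_adjoint_comp_self ι.toContinuousLinearMap).1
    ι.isometry
  exact congr($h x)

theorem norm_adjoint_apply_le (z : F) : ‖(ι.toContinuousLinearMap†) z‖ ≤ ‖z‖ := by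
  refine (ContinuousLinearMap.le_opNorm _ z).trans ?_
  rw [LinearIsometryEquiv.norm_map]
  simpa using mul_le_mul_of_nonneg_right ι.norm_toContinuousLinearMap_le (norm_nonneg z)

variable [MeasurableSpace E] [BorelSpace E] [MeasurableSpace F] [BorelSpace F]

omit [CompleteSpace F] in
theorem measurableEmbedding : MeasurableEmbedding ι :=
  ι.isometry.isClosedEmbedding.measurableEmbedding

theorem map_adjoint_map (μ : Measure E) : (μ.map ι).map (ι.toContinuousLinearMap†) = μ := by
  rw [Measure.map_map (by fun_prop) (by fun_prop)]
  simp [Function.comp_def, adjoint_apply_apply]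

theorem map_adjoint_map_add [SecondCountableTopology F] (μ : Measure E) {φ : F → F}
    (hφ : AEStronglyMeasurable φ (μ.map ι)) :
    ((μ.map ι).map fun z => z + φ z).map (ι.toContinuousLinearMap†) =
      μ.map fun x => x + (ι.toContinuousLinearMap†) (φ (ι x)) := by
  have hadd : AEMeasurable (fun z => z + φ z) (μ.map ι) :=
    (aestronglyMeasurable_id.add hφ).aemeasurable
  rw [AEMeasurable.map_map_of_aemeasurable (by fun_prop) hadd,
    AEMeasurable.map_map_of_aemeasurable (by fun_prop) (by fun_prop)]
  simp [Function.comp_def, adjoint_apply_apply]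

theorem integral_norm_sq_adjoint_le (μ : Measure E) {φ : F → F} (hφ : MemLp φ 2 (μ.map ι)) :
    ∫ x, ‖(ι.toContinuousLinearMap†) (φ (ι x))‖ ^ 2 ∂μ ≤ ∫ z, ‖φ z‖ ^ 2 ∂(μ.map ι) := by
  have hφι : MemLp (φ ∘ ι) 2 μ := ι.measurableEmbedding.memLp_map_measure_iff.1 hφ
  rw [ι.measurableEmbedding.integral_map]
  refine integral_mono ((ι.toContinuousLinearMap†).comp_memLp' hφι).norm.integrable_sq
    hφι.norm.integrable_sq fun x => ?_
  gcongr
  exact ι.norm_adjoint_apply_le _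

theorem integral_inner_adjoint (μ : Measure E) (g : E → E) (φ : F → F) :
    ∫ z, ⟪ι (g ((ι.toContinuousLinearMap†) z)), φ z⟫ ∂(μ.map ι) =
      ∫ x, ⟪g x, (ι.toContinuousLinearMap†) (φ (ι x))⟫ ∂μ := by
  rw [ι.measurableEmbedding.integral_map]
  simp [adjoint_apply_apply, ContinuousLinearMap.adjoint_inner_right]

end LinearIsometry

theorem LDiffAt.comp_map_adjoint {m n : ℕ} {f : Measure (EuclideanSpace ℝ (Fin m)) → ℝ}
    {μ : Measure (EuclideanSpace ℝ (Fin m))}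
    {γ : EuclideanSpace ℝ (Fin m) → EuclideanSpace ℝ (Fin m)}
    (hf : LDiffAt f μ γ) (ι : EuclideanSpace ℝ (Fin m) →ₗᵢ[ℝ] EuclideanSpace ℝ (Fin n)) :
    LDiffAt (fun ν => f (ν.map (ι.toContinuousLinearMap†))) (μ.map ι)
      (fun z => ι (γ ((ι.toContinuousLinearMap†) z))) := by
  refine ⟨?_, fun ε hε => ?_⟩
  · rw [ι.measurableEmbedding.memLp_map_measure_iff]
    simpa [Function.comp_def, ι.adjoint_apply_apply] using
      ι.toContinuousLinearMap.comp_memLp' hf.1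
  obtain ⟨δ, hδ, H⟩ := hf.2 ε hε
  refine ⟨δ, hδ, fun φ hφ hφδ => ?_⟩
  have hπφι : MemLp (fun x => (ι.toContinuousLinearMap†) (φ (ι x))) 2 μ :=
    (ι.toContinuousLinearMap†).comp_memLp' (ι.measurableEmbedding.memLp_map_measure_iff.1 hφ)
  have hnorm := Real.sqrt_le_sqrt (ι.integral_norm_sq_adjoint_le μ hφ)
  dsimp only
  rw [ι.map_adjoint_map, ι.map_adjoint_map_add μ hφ.1, ι.integral_inner_adjoint]
  exact (H _ hπφι (hnorm.trans hφδ)).trans (by gcongr)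

noncomputable def pairEmbedZero (d : ℕ) :
    EuclideanSpace ℝ (Fin d) →ₗᵢ[ℝ] EuclideanSpace ℝ (Fin (d + 1)) where
  toFun x := pairEmbed (x, 0)
  map_add' x y := by ext i; induction i using Fin.lastCases <;> simp [pairEmbed]
  map_smul' c x := by ext i; induction i using Fin.lastCases <;> simp [pairEmbed]
  norm_map' x := by simp [EuclideanSpace.norm_eq, Fin.sum_univ_castSucc, pairEmbed]

theorem adjoint_pairEmbedZero (d : ℕ) :
    ⇑((pairEmbedZero d).toContinuousLinearMap†) = firstMarginal := by
  ext1 z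
  refine ext_inner_left ℝ fun x => ?_
  rw [ContinuousLinearMap.adjoint_inner_right]
  simp [pairEmbedZero, PiLp.inner_apply, Fin.sum_univ_castSucc, pairEmbed, firstMarginal,
    Fin.init]

theorem map_pairEmbed_prod_dirac {d : ℕ} (μ : Measure (EuclideanSpace ℝ (Fin d))) [SFinite μ] :
    (μ.prod (Measure.dirac 0)).map pairEmbed = μ.map (pairEmbedZero d) := by
  rw [Measure.prod_dirac, Measure.map_map (by unfold pairEmbed; fun_prop) (by fun_prop)]
  rfl

theorem lift_LDiffAt_general {d : ℕ}
    (f : Measure (EuclideanSpace ℝ (Fin d)) → ℝ)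
    (μ : Measure (EuclideanSpace ℝ (Fin d))) [IsProbabilityMeasure μ]
    (γ : EuclideanSpace ℝ (Fin d) → EuclideanSpace ℝ (Fin d))
    (hf : LDiffAt f μ γ) :
    LDiffAt (fun m : Measure (EuclideanSpace ℝ (Fin (d + 1))) =>
        f (Measure.map firstMarginal m))
      (Measure.map pairEmbed (μ.prod (Measure.dirac (0 : ℝ))))
      (fun x => pairEmbed (γ (firstMarginal x), 0)) := by
  rw [map_pairEmbed_prod_dirac, ← adjoint_pairEmbedZero]
  exact hf.comp_map_adjoint (pairEmbedZero d)

/-- Lifting an L-differentiable `f : P₂(ℝᵈ) → ℝ` to `f̃(μ̃) := f(μ̃(· × ℝ))` on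
`P₂(ℝᵈ × ℝ) = P₂(ℝ^{d+1})`: `f̃` is L-differentiable at `μ × δ₀` with
`D^L f̃(μ × δ₀)(x, r) = (D^L f(μ)(x), 0)`. -/
theorem lift_LDiffAt {d : ℕ}
    (f : Measure (EuclideanSpace ℝ (Fin d)) → ℝ)
    (μ : Measure (EuclideanSpace ℝ (Fin d))) [IsProbabilityMeasure μ]
    (hμ2 : MemLp (id : EuclideanSpace ℝ (Fin d) → EuclideanSpace ℝ (Fin d)) 2 μ)
    (γ : EuclideanSpace ℝ (Fin d) → EuclideanSpace ℝ (Fin d))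
    (hf : LDiffAt f μ γ) :
    LDiffAt (fun m : Measure (EuclideanSpace ℝ (Fin (d + 1))) =>
        f (Measure.map firstMarginal m))
      (Measure.map pairEmbed (μ.prod (Measure.dirac (0 : ℝ))))
      (fun x => pairEmbed (γ (firstMarginal x), 0)) :=
  lift_LDiffAt_general f μ γ hf
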